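/- For fixed a > 0, k > 0, and L ≥ ⌈ka⌉, the quantity f(ka/(L+1/2))^L decays super-exponentially in L: writing β(L) = −ln f(ka/(L+1/2)), the function β is positive and monotonically increasing for L ≥ ⌈ka⌉ and β(L) → ∞ as L → ∞. -/

import Mathlib

open MeasureTheory Filter Finset
open scoped Real RealInnerProductSpace ComplexConjugate

noncomputable section

/-- `ℝ³` as a Euclidean space. -/
abbrev E3 : Type := EuclideanSpace ℝ (Fin 3)
/-- `ℂ³` as a Euclidean (Hilbert) space. -/
abbrev C3 : Type := EuclideanSpace ℂ (Fin 3)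
/-- The unit sphere `S² ⊂ ℝ³`. -/
abbrev S2 : Type := Metric.sphere (0 : E3) 1

/-- The surface measure on the unit sphere `S²`. -/
def sphereMeasure : Measure S2 := (volume : Measure E3).toSphere

/-- The Bessel function of the first kind of real order `ν`, via its power series. -/
def besselJ (ν x : ℝ) : ℝ :=
  ∑' m : ℕ, ((-1 : ℝ) ^ m / (m.factorial * Real.Gamma (m + ν + 1))) *
    (x / 2) ^ (2 * m) * Real.rpow (x / 2) ν

/-- Siegel's comparison function `f(x) = x e^{√(1-x²)} / (1 + √(1-x²))`. -/
def siegelF (x : ℝ) : ℝ :=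
  x * Real.exp (Real.sqrt (1 - x ^ 2)) / (1 + Real.sqrt (1 - x ^ 2))

/-- The spherical Bessel function of the first kind of degree `ℓ`,
`j_ℓ(u) = √(π/(2u)) J_{ℓ+1/2}(u)`, extended by continuity at `u = 0`. -/
def sBesselJ (ℓ : ℕ) (u : ℝ) : ℝ :=
  if u = 0 then (if ℓ = 0 then 1 else 0)
  else Real.sqrt (Real.pi / (2 * u)) * besselJ ((ℓ : ℝ) + 1 / 2) u

/-- The Legendre polynomial of degree `ℓ` (Rodrigues' formula). -/
def legendreP (ℓ : ℕ) (x : ℝ) : ℝ :=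
  (1 / ((2 : ℝ) ^ ℓ * ℓ.factorial)) *
    iteratedDeriv ℓ (fun t : ℝ => (t ^ 2 - 1) ^ ℓ) x

/-- Associated Legendre function `P_ℓ^n` for natural order `n` (Condon–Shortley phase). -/
def assocLegendreNat (ℓ n : ℕ) (x : ℝ) : ℝ :=
  (-1 : ℝ) ^ n * Real.rpow (1 - x ^ 2) ((n : ℝ) / 2) *
    iteratedDeriv n (legendreP ℓ) x

/-- Associated Legendre function `P_ℓ^m` for integer order `m`. -/
def assocLegendre (ℓ : ℕ) (m : ℤ) (x : ℝ) : ℝ :=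
  if 0 ≤ m then assocLegendreNat ℓ m.toNat x
  else (-1 : ℝ) ^ (-m).toNat *
    ((ℓ - (-m).toNat).factorial : ℝ) / ((ℓ + (-m).toNat).factorial : ℝ) *
    assocLegendreNat ℓ (-m).toNat x

/-- The (complex, orthonormal) scalar spherical harmonic `Y_ℓ^m`, defined on `ℝ³ \ {0}`
as a degree-zero homogeneous function (so its restriction to `S²` is the usual one). -/
def sphericalHarmonic (ℓ : ℕ) (m : ℤ) (v : E3) : ℂ :=
  (Real.sqrt ((2 * ℓ + 1) / (4 * Real.pi) *
      ((((ℓ : ℤ) - m).toNat.factorial : ℝ) / (((ℓ : ℤ) + m).toNat.factorial : ℝ))) : ℂ) *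
    (assocLegendre ℓ m (v 2 / ‖v‖) : ℂ) *
    Complex.exp (Complex.I * (m : ℂ) * (Complex.arg ((v 0 : ℂ) + (v 1 : ℂ) * Complex.I) : ℂ))

/-- Embedding of a real vector into `ℂ³`. -/
def realToC3 (v : E3) : C3 := (WithLp.equiv 2 (Fin 3 → ℂ)).symm fun i => (v i : ℂ)

/-- Cross product on `ℂ³`. -/
def crossC (a b : C3) : C3 :=
  (WithLp.equiv 2 (Fin 3 → ℂ)).symm
    ![a 1 * b 2 - a 2 * b 1, a 2 * b 0 - a 0 * b 2, a 0 * b 1 - a 1 * b 0]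

/-- Gradient of the (degree-zero homogeneously extended) spherical harmonic `Y_ℓ^m`,
as a vector in `ℂ³`. -/
def gradSH (ℓ : ℕ) (m : ℤ) (v : E3) : C3 :=
  (WithLp.equiv 2 (Fin 3 → ℂ)).symm fun i =>
    fderiv ℝ (sphericalHarmonic ℓ m) v (EuclideanSpace.single i 1)

/-- Radial vector spherical harmonic `Y_ℓ^m(r̂) r̂`. -/
def vshY (ℓ : ℕ) (m : ℤ) (v : E3) : C3 := sphericalHarmonic ℓ m v • realToC3 v

/-- Tangential vector spherical harmonic `Ψ_ℓ^m = r ∇Y_ℓ^m`. -/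
def vshPsi (ℓ : ℕ) (m : ℤ) (v : E3) : C3 := ‖v‖ • gradSH ℓ m v

/-- Tangential vector spherical harmonic `Φ_ℓ^m = r̂ × ∇Y_ℓ^m` (on the unit sphere). -/
def vshPhi (ℓ : ℕ) (m : ℤ) (v : E3) : C3 := crossC (realToC3 v) (gradSH ℓ m v)

/-- The orthogonal projection `I₃ - r̂ r̂ᵀ` onto the plane perpendicular to `v`,
applied to a complex vector. -/
def tangentProj (v : E3) (w : C3) : C3 :=
  w - (∑ i : Fin 3, (v i : ℂ) * w i) • realToC3 v

/-- The exponent `β(L) = -ln f(ka/(L+1/2))` appearing in the super-exponential decay. -/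
def betaFn (a k : ℝ) (L : ℕ) : ℝ := - Real.log (siegelF (k * a / ((L : ℝ) + 1 / 2)))

end

/-!
Put `s = √(1 - x²)`. Since `log x = (log (1 - s) + log (1 + s)) / 2`, one finds
`log f(x) = s - artanh s`, whose derivative `1 - 1 / (1 - s²)` is negative on `(0, 1)`. Hence `f`
is strictly increasing on `(0, 1]` with `f 1 = 1`; as `x_L = ka / (L + 1/2)` lies in `(0, 1)` for
`L ≥ ⌈ka⌉` and decreases in `L`, `β(L) = -log f(x_L)` is positive and increasing. Divergence
follows from the crude bound `f(x) ≤ e x`, i.e. `β(L) ≥ log (1 / x_L) - 1`.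
-/
namespace Real

theorem hasDerivAt_artanh {x : ℝ} (hx : x ∈ Set.Ioo (-1) 1) :
    HasDerivAt artanh (1 - x ^ 2)⁻¹ x := by
  obtain ⟨hx₁, hx₂⟩ := hx
  have hlog_add : HasDerivAt (fun y => log (1 + y)) (1 / (1 + x)) x :=
    ((hasDerivAt_id' x).const_add 1).log (by linarith)
  have hlog_sub : HasDerivAt (fun y => log (1 - y)) (-1 / (1 - x)) x :=
    ((hasDerivAt_id' x).const_sub 1).log (by linarith)
  have hlog : HasDerivAt (fun y => (log (1 + y) - log (1 - y)) / 2) (1 - x ^ 2)⁻¹ x := by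
    refine ((hlog_add.sub hlog_sub).div_const 2).congr_deriv ?_
    have : 1 + x ≠ 0 := by linarith
    have : 1 - x ≠ 0 := by linarith
    have : 1 - x ^ 2 ≠ 0 := by nlinarith
    field_simp
    ring
  refine hlog.congr_of_eventuallyEq ?_
  filter_upwards [isOpen_Ioo.mem_nhds ⟨hx₁, hx₂⟩] with y hy
  rw [artanh_eq_half_log (Set.Ioo_subset_Icc_self hy),
    log_div (by linarith [hy.1]) (by linarith [hy.2])]
  ring

theorem differentiableAt_artanh {x : ℝ} (hx : x ∈ Set.Ioo (-1) 1) :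
    DifferentiableAt ℝ artanh x :=
  (hasDerivAt_artanh hx).differentiableAt

theorem strictAntiOn_sub_artanh : StrictAntiOn (fun s => s - artanh s) (Set.Ico 0 1) := by
  refine strictAntiOn_of_deriv_neg (convex_Ico 0 1) ?_ ?_
  · refine continuousOn_id.sub fun s hs => ?_
    exact (differentiableAt_artanh ⟨by linarith [hs.1], hs.2⟩).continuousAt.continuousWithinAt
  · intro s hs
    rw [interior_Ico] at hs
    have hsq : 0 < 1 - s ^ 2 := by nlinarith [hs.1, hs.2]
    have hderiv : HasDerivAt (fun s => s - artanh s) (1 - (1 - s ^ 2)⁻¹) s :=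
      (hasDerivAt_id' s).sub (hasDerivAt_artanh ⟨by linarith [hs.1], hs.2⟩)
    rw [hderiv.deriv]
    have : 1 < (1 - s ^ 2)⁻¹ := one_lt_inv_iff₀.mpr ⟨hsq, by nlinarith [hs.1]⟩
    linarith

end Real

open Real

theorem siegelF_pos {x : ℝ} (hx : 0 < x) : 0 < siegelF x := by
  unfold siegelF; positivity

theorem siegelF_one : siegelF 1 = 1 := by
  simp [siegelF]

theorem siegelF_le_exp_one_mul {x : ℝ} (hx : 0 ≤ x) : siegelF x ≤ exp 1 * x := by
  have hs : √(1 - x ^ 2) ≤ 1 := sqrt_le_one.mpr (by nlinarith)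
  unfold siegelF
  rw [div_le_iff₀ (by positivity)]
  calc x * exp √(1 - x ^ 2) ≤ x * exp 1 := by gcongr
    _ ≤ exp 1 * x * (1 + √(1 - x ^ 2)) := by
      nlinarith [mul_nonneg (mul_nonneg hx (exp_pos 1).le) (sqrt_nonneg (1 - x ^ 2))]

theorem log_siegelF_eq {x : ℝ} (hx₀ : 0 < x) (hx₁ : x ≤ 1) :
    log (siegelF x) = √(1 - x ^ 2) - artanh √(1 - x ^ 2) := by
  set s := √(1 - x ^ 2) with hs_def
  have hs₀ : 0 ≤ s := sqrt_nonneg _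
  have hs2 : s ^ 2 = 1 - x ^ 2 := sq_sqrt (by nlinarith)
  have hs₁ : s < 1 := by nlinarith
  have hlogx : log x = (log (1 - s) + log (1 + s)) / 2 := by
    rw [← log_mul (by linarith) (by linarith), ← log_sqrt (by nlinarith),
      show (1 - s) * (1 + s) = x ^ 2 by nlinarith, sqrt_sq hx₀.le]
  rw [siegelF, ← hs_def, log_div (by positivity) (by linarith), log_mul hx₀.ne' (exp_pos s).ne',
    log_exp, hlogx, artanh_eq_half_log ⟨by linarith, hs₁.le⟩,
    log_div (by linarith) (by linarith)]
  ring

theorem strictMonoOn_siegelF : StrictMonoOn siegelF (Set.Ioc 0 1) := by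
  intro x hx y hy hxy
  have hmem : ∀ z ∈ Set.Ioc (0 : ℝ) 1, √(1 - z ^ 2) ∈ Set.Ico 0 1 := fun z hz =>
    ⟨sqrt_nonneg _, (sqrt_lt' one_pos).mpr (by nlinarith [hz.1])⟩
  have hlt : √(1 - y ^ 2) < √(1 - x ^ 2) :=
    sqrt_lt_sqrt (by nlinarith [hy.1, hy.2]) (by nlinarith [hx.1])
  have hlog : √(1 - x ^ 2) - artanh √(1 - x ^ 2) < √(1 - y ^ 2) - artanh √(1 - y ^ 2) :=
    strictAntiOn_sub_artanh (hmem y hy) (hmem x hx) hlt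
  rw [← log_siegelF_eq hx.1 hx.2, ← log_siegelF_eq hy.1 hy.2] at hlog
  exact (log_lt_log_iff (siegelF_pos hx.1) (siegelF_pos hy.1)).mp hlog

theorem log_inv_sub_one_le_neg_log_siegelF {x : ℝ} (hx : 0 < x) :
    log x⁻¹ - 1 ≤ -log (siegelF x) := by
  have h := log_le_log (siegelF_pos hx) (siegelF_le_exp_one_mul hx.le)
  rw [log_mul (exp_pos 1).ne' hx.ne', log_exp] at h
  rw [log_inv]
  linarith

theorem div_natCast_add_half_mem_Ioo {c : ℝ} (hc : 0 < c) {L : ℕ} (hL : ⌈c⌉₊ ≤ L) :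
    c / ((L : ℝ) + 1 / 2) ∈ Set.Ioo 0 1 := by
  have hcL : c ≤ L := Nat.ceil_le.mp hL
  exact ⟨by positivity, (div_lt_one (by positivity)).mpr (by linarith)⟩

section betaFn

variable {a k : ℝ}

theorem betaFn_pos (hka : 0 < k * a) {L : ℕ} (hL : ⌈k * a⌉₊ ≤ L) : 0 < betaFn a k L := by
  obtain ⟨hx₀, hx₁⟩ := div_natCast_add_half_mem_Ioo hka hL
  have hlt := strictMonoOn_siegelF ⟨hx₀, hx₁.le⟩ ⟨one_pos, le_rfl⟩ hx₁
  rw [siegelF_one] at hlt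
  exact neg_pos.mpr (log_neg (siegelF_pos hx₀) hlt)

theorem betaFn_le_betaFn (hka : 0 < k * a) {L₁ L₂ : ℕ} (hL₁ : ⌈k * a⌉₊ ≤ L₁) (hL : L₁ ≤ L₂) :
    betaFn a k L₁ ≤ betaFn a k L₂ := by
  obtain ⟨hx₁₀, hx₁₁⟩ := div_natCast_add_half_mem_Ioo hka hL₁
  obtain ⟨hx₂₀, hx₂₁⟩ := div_natCast_add_half_mem_Ioo hka (hL₁.trans hL)
  have hx : k * a / ((L₂ : ℝ) + 1 / 2) ≤ k * a / ((L₁ : ℝ) + 1 / 2) :=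
    div_le_div_of_nonneg_left hka.le (by positivity) (by gcongr)
  exact neg_le_neg <| log_le_log (siegelF_pos hx₂₀) <|
    strictMonoOn_siegelF.monotoneOn ⟨hx₂₀, hx₂₁.le⟩ ⟨hx₁₀, hx₁₁.le⟩ hx

theorem tendsto_betaFn_atTop (hka : 0 < k * a) : Tendsto (betaFn a k) atTop atTop := by
  have hlower : ∀ L : ℕ, log (((L : ℝ) + 1 / 2) / (k * a)) - 1 ≤ betaFn a k L := fun L => by
    simpa only [betaFn, inv_div] using
      log_inv_sub_one_le_neg_log_siegelF (x := k * a / ((L : ℝ) + 1 / 2)) (by positivity)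
  refine tendsto_atTop_mono hlower (tendsto_atTop_add_const_right _ _ ?_)
  exact tendsto_log_atTop.comp
    ((tendsto_atTop_add_const_right _ _ tendsto_natCast_atTop_atTop).atTop_div_const hka)

end betaFn

/-- Super-exponential decay of `f(ka/(L+1/2))^L`: the exponent
`β(L) = -ln f(ka/(L+1/2))` is positive and monotonically increasing for
integer `L ≥ ⌈ka⌉`, and `β(L) → ∞` as `L → ∞`. -/
theorem betaFn_pos_monotone_tendsto (a k : ℝ) (ha : 0 < a) (hk : 0 < k) :
    (∀ L : ℕ, ⌈k * a⌉₊ ≤ L → 0 < betaFn a k L) ∧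
    (∀ L₁ L₂ : ℕ, ⌈k * a⌉₊ ≤ L₁ → L₁ ≤ L₂ → betaFn a k L₁ ≤ betaFn a k L₂) ∧
    Tendsto (fun L : ℕ => betaFn a k L) atTop atTop := by
  have hka : 0 < k * a := mul_pos hk ha
  exact ⟨fun _ => betaFn_pos hka, fun _ _ => betaFn_le_betaFn hka, tendsto_betaFn_atTop hka⟩
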